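/- (Identification in Example 2.) Let T ≥ 3, and suppose π_{0t} ∈ R^T for t = 1,…,T are given by π_{01} = (β₀ + θ_{01}, θ_{02}, …, θ_{0T})' and, for t ≥ 2, π_{0t} = λ_{0t}θ₀ + β₀ e_t, where θ₀ = (θ_{01},…,θ_{0T})', e_t is the t-th standard basis vector, and λ_{01} = 1. If at least two of the parameters θ_{02},…,θ_{0T} are nonzero, then the map (β₀, θ₀, λ_{02},…,λ_{0T}) ↦ (π_{01},…,π_{0T}) is injective: the parameters are uniquely determined by (π_{01},…,π_{0T}). -/
import Mathlib


/-- Identification in Example 2: with `π_t = λ_t θ + β e_t`, the normalization `λ_1 = 1`,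
and at least two of `θ_2,…,θ_T` nonzero, the parameters `(β, θ, λ)` are uniquely
determined by `(π_1,…,π_T)`. -/
theorem example2_identification (T : ℕ) (hT : 3 ≤ T)
    (β β' : ℝ) (θ θ' : Fin T → ℝ) (lam lam' : Fin T → ℝ)
    (hlam0 : lam ⟨0, by omega⟩ = 1) (hlam0' : lam' ⟨0, by omega⟩ = 1)
    (htwo : ∃ s t : Fin T, s ≠ t ∧ s ≠ ⟨0, by omega⟩ ∧ t ≠ ⟨0, by omega⟩ ∧
      θ s ≠ 0 ∧ θ t ≠ 0)
    (heq : ∀ t j : Fin T,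
      lam t * θ j + β * (if j = t then 1 else 0)
        = lam' t * θ' j + β' * (if j = t then 1 else 0)) :
    β = β' ∧ θ = θ' ∧ lam = lam' := by
  set z : Fin T := ⟨0, by omega⟩ with hz
  -- θ agrees off the first coordinate
  have hθ : ∀ j : Fin T, j ≠ z → θ j = θ' j := by
    intro j hj
    have h := heq z j
    simp [hj, hlam0, hlam0'] at h
    exact h
  have h0 : θ z + β = θ' z + β' := by
    have h := heq z z
    simp [hlam0, hlam0'] at h
    linarith
  obtain ⟨s, t, hst, hs0, ht0, hθs, hθt⟩ := htwo
  have hθ's : θ' s = θ s := (hθ s hs0).symm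
  have hθ't : θ' t = θ t := (hθ t ht0).symm
  have hlam : ∀ r : Fin T, lam r = lam' r := by
    intro r
    by_cases hrs : r = s
    · have h := heq r t
      have htr : t ≠ r := fun h' => hst (hrs ▸ h'.symm)
      simp [htr, hθ't] at h
      exact h.resolve_right hθt
    · have h := heq r s
      have hsr : s ≠ r := fun h' => hrs h'.symm
      simp [hsr, hθ's] at h
      exact h.resolve_right hθs
  have hβ : β = β' := by
    have h := heq s s
    rw [hlam s, hθ's] at h
    simp at h
    linarith
  have hθ0 : θ z = θ' z := by linarith
  refine ⟨hβ, funext fun j => ?_, funext hlam⟩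
  by_cases hj : j = z
  · rw [hj]; exact hθ0
  · exact hθ j hj
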